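/- Let A and B be commuting bounded linear operators on a complex Hilbert space H with N(A) ⊆ N(A*), N(B) ⊆ N(B*), and both R(A) and R(B) closed. Let B' = P ∘ B restricted to N(A)⊥ (the compression of B to N(A)⊥, where P is the orthogonal projection onto N(A)⊥) and let Z = B restricted to N(A). If N(Z*) ⊆ N(Z), then both R(B') and R(Z) are closed. -/

import Mathlib

/-!
Let `P` be the orthogonal projection onto `N(A)`. Because `Z` is the restriction of `B`,
`Z* P = P B*`, so `N(Z*) ⊆ N(Z)` gives `P N(B*) ⊆ N(B)`; with `N(B) ⊆ N(B*)` this makes `N(B*)`,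
`N(B)` and `R(B) = N(B*)ᗮ` invariant under `P`. Hence `R(B') = R(B) ∩ N(A)ᗮ`, which is closed.
Invariance of `N(B)` under `P` means the projection onto `N(B)` commutes with `P`, so
`R(Z) = B(N(A)) = B(N(A) ∩ N(B)ᗮ)`, the image of a closed set under `B|_{N(B)ᗮ}`, which is
bounded below since `R(B)` is closed.
-/

open Submodule ContinuousLinearMap Module.End Topology
open scoped InnerProduct

section

variable {𝕜 E F : Type*} [RCLike 𝕜] [NormedAddCommGroup E] [InnerProductSpace 𝕜 E]

lemma image_val_range_eq_range_inter_orthogonal {N : Submodule 𝕜 E} [N.HasOrthogonalProjection]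
    {T : E →L[𝕜] E} (hN : N ∈ invtSubmodule T) (hR : T.range ∈ invtSubmodule N.starProjection)
    {B' : Nᗮ →L[𝕜] Nᗮ} (hB' : ∀ x : Nᗮ, T x - B' x ∈ N) :
    Subtype.val '' Set.range B' = Set.range T ∩ Nᗮ := by
  ext y
  constructor
  · rintro ⟨_, ⟨v, rfl⟩, rfl⟩
    have hP : N.starProjection (T v) = T v - B' v :=
      eq_starProjection_of_mem_orthogonal' (hB' v) (B' v).2 (sub_add_cancel _ _).symm
    have hrange : (B' v : E) ∈ T.range := by
      rw [← sub_sub_cancel (T v) (B' v), ← hP]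
      exact T.range.sub_mem (LinearMap.mem_range_self _ _) (hR (LinearMap.mem_range_self _ _))
    exact ⟨hrange, (B' v).2⟩
  · rintro ⟨⟨x, rfl⟩, hx⟩
    let v : Nᗮ := ⟨x - N.starProjection x, N.sub_starProjection_mem_orthogonal x⟩
    have hmem : T x - B' v ∈ N := by
      have hsplit : T x - B' v = T (N.starProjection x) + (T v - B' v) := by
        simp only [v, map_sub]
        abel
      rw [hsplit]
      exact N.add_mem (hN (N.starProjection_apply_mem x)) (hB' v)
    have hmem_orthogonal : T x - B' v ∈ Nᗮ := Nᗮ.sub_mem hx (B' v).2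
    exact ⟨B' v, ⟨v, rfl⟩, (sub_eq_zero.mp (N.inf_orthogonal_eq_bot.le ⟨hmem, hmem_orthogonal⟩)).symm⟩

lemma image_val_range_eq_image_of_restrict {N : Submodule 𝕜 E} {T : E →L[𝕜] E} {Z : N →L[𝕜] N}
    (hZ : ∀ x, (Z x : E) = T x) : Subtype.val '' Set.range Z = T '' N := by
  ext y
  constructor
  · rintro ⟨_, ⟨x, rfl⟩, rfl⟩
    exact ⟨x, x.2, (hZ x).symm⟩
  · rintro ⟨x, hx, rfl⟩
    exact ⟨_, ⟨⟨x, hx⟩, rfl⟩, hZ ⟨x, hx⟩⟩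

variable [CompleteSpace E]

section ClosedRange

variable [NormedAddCommGroup F] [NormedSpace 𝕜 F]

lemma apply_sub_starProjection_ker (T : E →L[𝕜] F) (x : E) :
    T (x - T.ker.starProjection x) = T x := by
  have hker : T (T.ker.starProjection x) = 0 := T.ker.starProjection_apply_mem x
  rw [map_sub, hker, sub_zero]

lemma isClosedEmbedding_comp_subtype_orthogonal_ker [CompleteSpace F] {T : E →L[𝕜] F}
    (hT : IsClosed (Set.range T)) : IsClosedEmbedding (T ∘L T.kerᗮ.subtypeL) := by
  have hinj : Function.Injective (T ∘L T.kerᗮ.subtypeL) :=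
    (injective_iff_map_eq_zero _).mpr fun x hx ↦
      Subtype.ext <| T.ker.inf_orthogonal_eq_bot.le ⟨hx, x.2⟩
  have hrange : Set.range (T ∘L T.kerᗮ.subtypeL) = Set.range T := by
    refine (Set.range_comp_subset_range (Subtype.val : T.kerᗮ → E) T).antisymm ?_
    rintro _ ⟨x, rfl⟩
    exact ⟨⟨_, T.ker.sub_starProjection_mem_orthogonal x⟩, apply_sub_starProjection_ker T x⟩
  obtain ⟨K, hK⟩ := (T ∘L T.kerᗮ.subtypeL).antilipschitz_of_injective_of_isClosed_range hinj
    (hrange ▸ hT)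
  exact hK.isClosedEmbedding (T ∘L T.kerᗮ.subtypeL).uniformContinuous

lemma isClosed_image_of_mem_invtSubmodule_starProjection_ker [CompleteSpace F] {T : E →L[𝕜] F}
    (hT : IsClosed (Set.range T)) {M : Submodule 𝕜 E} (hM : IsClosed (M : Set E))
    (hMT : M ∈ invtSubmodule T.ker.starProjection) : IsClosed (T '' M) := by
  have himage : T '' M = (T ∘L T.kerᗮ.subtypeL) '' (Subtype.val ⁻¹' M) := by
    refine subset_antisymm ?_ (by rintro _ ⟨x, hx, rfl⟩; exact ⟨x, hx, rfl⟩)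
    rintro _ ⟨x, hx, rfl⟩
    exact ⟨⟨_, T.ker.sub_starProjection_mem_orthogonal x⟩, M.sub_mem hx (hMT hx),
      apply_sub_starProjection_ker T x⟩
  rw [himage]
  exact (isClosedEmbedding_comp_subtype_orthogonal_ker hT).isClosedMap _
    (hM.preimage continuous_subtype_val)

end ClosedRange

lemma orthogonal_mem_invtSubmodule_starProjection {K L : Submodule 𝕜 E}
    [K.HasOrthogonalProjection] (h : L ∈ invtSubmodule K.starProjection) :
    Lᗮ ∈ invtSubmodule K.starProjection :=
  orthogonal_mem_invtSubmodule (by rwa [(isSelfAdjoint_starProjection K).adjoint_eq])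

lemma mem_invtSubmodule_starProjection_comm {K L : Submodule 𝕜 E}
    [K.HasOrthogonalProjection] [L.HasOrthogonalProjection]
    (h : L ∈ invtSubmodule K.starProjection) : K ∈ invtSubmodule L.starProjection := by
  intro u (hu : u ∈ K)
  -- `u = P_K (P_L u) + P_K (u - P_L u)` splits `u` along `L ⊕ Lᗮ`.
  have hL : L.starProjection u = K.starProjection (L.starProjection u) := by
    refine eq_starProjection_of_mem_orthogonal'
      (h (L.starProjection_apply_mem u) : K.starProjection (L.starProjection u) ∈ L)
      (orthogonal_mem_invtSubmodule_starProjection h (L.sub_starProjection_mem_orthogonal u)) ?_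
    rw [coe_coe, ← map_add, add_sub_cancel, K.starProjection_eq_self_iff.mpr hu]
  show L.starProjection u ∈ K
  rw [hL]
  exact K.starProjection_apply_mem _

section Restriction

variable {N : Submodule 𝕜 E} [CompleteSpace N] {T : E →L[𝕜] E} {Z : N →L[𝕜] N}

lemma adjoint_apply_orthogonalProjectionOnto (hZ : ∀ x, (Z x : E) = T x) (y : E) :
    (Z†) (N.orthogonalProjectionOnto y) = N.orthogonalProjectionOnto ((T†) y) := by
  refine ext_inner_left 𝕜 fun m ↦ ?_
  rw [adjoint_inner_right, inner_orthogonalProjectionOnto_eq_of_mem_left, hZ,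
    ← adjoint_inner_right, inner_orthogonalProjectionOnto_eq_of_mem_left]

lemma starProjection_mem_ker_of_mem_ker_adjoint (hZ : ∀ x, (Z x : E) = T x)
    (hZker : (Z†).ker ≤ Z.ker) {n : E} (hn : n ∈ (T†).ker) : N.starProjection n ∈ T.ker := by
  have hZn : Z (N.orthogonalProjectionOnto n) = 0 := hZker <| by
    show (Z†) _ = 0
    rw [adjoint_apply_orthogonalProjectionOnto hZ, show (T†) n = 0 from hn, map_zero]
  show T (N.starProjection n) = 0
  rw [starProjection_apply, ← hZ, hZn, ZeroMemClass.coe_zero]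

end Restriction

end

theorem stmt12 {H : Type*} [NormedAddCommGroup H] [InnerProductSpace ℂ H] [CompleteSpace H]
    (A B : H →L[ℂ] H)
    (hB : LinearMap.ker (B : H →ₗ[ℂ] H) ≤ LinearMap.ker (ContinuousLinearMap.adjoint B : H →ₗ[ℂ] H))
    (hBran : IsClosed (Set.range B))
    (B' : (LinearMap.ker (A : H →ₗ[ℂ] H))ᗮ →L[ℂ] (LinearMap.ker (A : H →ₗ[ℂ] H))ᗮ)
    (hB' : ∀ x : (LinearMap.ker (A : H →ₗ[ℂ] H))ᗮ, B x - (B' x : H) ∈ LinearMap.ker (A : H →ₗ[ℂ] H))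
    (Z : LinearMap.ker (A : H →ₗ[ℂ] H) →L[ℂ] LinearMap.ker (A : H →ₗ[ℂ] H))
    (hZ : ∀ x : LinearMap.ker (A : H →ₗ[ℂ] H), (Z x : H) = B x)
    (hcoqp : LinearMap.ker (ContinuousLinearMap.adjoint Z : LinearMap.ker (A : H →ₗ[ℂ] H) →ₗ[ℂ] LinearMap.ker (A : H →ₗ[ℂ] H)) ≤ LinearMap.ker (Z : LinearMap.ker (A : H →ₗ[ℂ] H) →ₗ[ℂ] LinearMap.ker (A : H →ₗ[ℂ] H))) :
    IsClosed (Set.range B') ∧ IsClosed (Set.range Z) := by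
  have hinvt : A.ker ∈ invtSubmodule B := fun x hx ↦ by
    show B x ∈ A.ker
    exact hZ ⟨x, hx⟩ ▸ (Z ⟨x, hx⟩).2
  have hker : B.ker ∈ invtSubmodule A.ker.starProjection := fun n hn ↦
    starProjection_mem_ker_of_mem_ker_adjoint hZ hcoqp (hB hn)
  have hker_adjoint : (B†).ker ∈ invtSubmodule A.ker.starProjection := fun n hn ↦
    hB (starProjection_mem_ker_of_mem_ker_adjoint hZ hcoqp hn)
  have hrange : B.range = (B†).kerᗮ := by
    rw [orthogonal_ker, adjoint_adjoint, IsClosed.submodule_topologicalClosure_eq]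
    rwa [LinearMap.coe_range, coe_coe]
  constructor
  · refine (isClosed_orthogonal A.ker).isClosedEmbedding_subtypeVal.isClosed_iff_image_isClosed.mpr ?_
    convert hBran.inter (isClosed_orthogonal A.ker) using 1
    exact image_val_range_eq_range_inter_orthogonal hinvt
      (hrange ▸ orthogonal_mem_invtSubmodule_starProjection hker_adjoint) hB'
  · refine A.isClosed_ker.isClosedEmbedding_subtypeVal.isClosed_iff_image_isClosed.mpr ?_
    convert isClosed_image_of_mem_invtSubmodule_starProjection_ker hBran A.isClosed_ker
      (mem_invtSubmodule_starProjection_comm hker) using 1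
    exact image_val_range_eq_image_of_restrict hZ
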